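/- Let (R, m) be a commutative Noetherian local ring, M a complete R-module and U a submodule of M. Then U is complete if and only if M/U is reduced. -/

import Mathlib

/-!
Radical-full submodules of `M ⧸ U` are the images of the `V` with `V = I • V + U`, so both sides
say something about such `V`.

If `U` is complete, such a `V` is Hausdorff (as a submodule of `M`) and generated by `U` modulo
`I • V`, so the complete Nakayama lemma makes `U → V` surjective.

Conversely, completeness of `M` extends the inclusion `U → M` to `φ : Û → M`. Since `I` is finitely
generated, `Û = I • Û + U`, so `range φ = I • range φ + U`; if `M ⧸ U` is reduced this forces
`range φ ≤ U`. Then `ξ ↦ ξ - φ ξ` kills `U`, so its range is `I`-divisible, hence zero in the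
Hausdorff module `Û`; as that range contains `ker φ`, the map `U → Û` is bijective.
-/

open IsLocalRing Submodule AdicCompletion

universe u v

variable {R : Type*} [CommRing R] {I : Ideal R} {M : Type*} [AddCommGroup M] [Module R M]

namespace Submodule

theorem le_pow_smul_of_le_smul {N : Submodule R M} (h : N ≤ I • N) (n : ℕ) : N ≤ I ^ n • N := by
  induction n with
  | zero => simp
  | succ n ih =>
    calc N ≤ I • N := h
      _ ≤ I • I ^ n • N := smul_mono le_rfl ih
      _ = I ^ (n + 1) • N := by rw [smul_smul, ← pow_succ']

instance isHausdorff [IsHausdorff I M] (N : Submodule R M) : IsHausdorff I N :=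
  ⟨fun x hx => Subtype.ext <| IsHausdorff.haus ‹_› (x : M) fun n => by
    have := (mem_smul_top_iff _ N _).mp (SModEq.zero.mp (hx n))
    exact SModEq.zero.mpr (smul_mono le_rfl le_top this)⟩

end Submodule

theorem IsHausdorff.eq_bot_of_le_smul [IsHausdorff I M] {N : Submodule R M} (h : N ≤ I • N) :
    N = ⊥ := by
  refine eq_bot_iff.mpr fun x hx => IsHausdorff.haus ‹_› x fun n => ?_
  exact SModEq.zero.mpr (smul_mono le_rfl le_top (le_pow_smul_of_le_smul h n hx))

theorem AdicCompletion.smul_top_sup_range_of (hI : I.FG) (N : Type*) [AddCommGroup N]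
    [Module R N] : I • ⊤ ⊔ LinearMap.range (of I N) = ⊤ := by
  refine eq_top_iff.mpr fun ξ _ => ?_
  obtain ⟨x, hx⟩ := mkQ_surjective _ (eval I N 1 ξ)
  have hξx : ξ - of I N x ∈ (I • ⊤ : Submodule R (AdicCompletion I N)) := by
    rw [show I • ⊤ = _ by simpa using pow_smul_top_eq_ker_eval (M := N) (n := 1) hI,
      LinearMap.mem_ker, map_sub, eval_of, ← hx, mkQ_apply, sub_self]
  exact sub_add_cancel ξ (of I N x) ▸ add_mem_sup hξx (LinearMap.mem_range_self _ x)

namespace Submodule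

theorem forall_quotient_smul_eq_imp_eq_bot_iff (U : Submodule R M) :
    (∀ W : Submodule R (M ⧸ U), I • W = W → W = ⊥) ↔
      ∀ V : Submodule R M, V ≤ I • V ⊔ U → V ≤ U := by
  constructor
  · intro h V hV
    have hW : I • V.map U.mkQ = V.map U.mkQ := by
      refine le_antisymm smul_le_right ?_
      simpa only [Submodule.map_sup, map_smul'', mkQ_map_self, sup_bot_eq] using
        map_mono (f := U.mkQ) hV
    simpa only [← LinearMap.le_ker_iff_map, ker_mkQ] using h _ hW
  · intro h W hW
    have hV : W.comap U.mkQ ≤ I • W.comap U.mkQ ⊔ U := by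
      rw [sup_comm, ← comap_map_mkQ, map_smul'', map_comap_eq_of_surjective U.mkQ_surjective, hW]
    rw [← map_comap_eq_of_surjective U.mkQ_surjective W, ← LinearMap.le_ker_iff_map, ker_mkQ]
    exact h _ hV

theorem le_of_le_smul_sup [IsHausdorff I M] (U : Submodule R M) [IsPrecomplete I U]
    {V : Submodule R M} (hUV : U ≤ V) (hV : V ≤ I • V ⊔ U) : V ≤ U := by
  have hsurj : Function.Surjective (inclusion hUV) := by
    refine surjective_of_mkQ_comp_surjective (I := I) fun y => ?_
    obtain ⟨v, rfl⟩ := mkQ_surjective _ y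
    obtain ⟨w, hw, u, hu, hwu⟩ := mem_sup.mp (hV v.2)
    refine ⟨⟨u, hu⟩, (Submodule.Quotient.eq _).mpr ((mem_smul_top_iff _ V _).mpr ?_)⟩
    simpa [← hwu] using hw
  intro x hx
  obtain ⟨u, hu⟩ := hsurj ⟨x, hx⟩
  rw [← show (u : M) = x from congrArg Subtype.val hu]
  exact u.2

variable (I) [IsAdicComplete I M] (U : Submodule R M)

noncomputable def adicCompletionLift : AdicCompletion I U →ₗ[R] M :=
  (ofLinearEquiv I M).symm.toLinearMap ∘ₗ AdicCompletion.map I U.subtype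

theorem adicCompletionLift_comp_of : adicCompletionLift I U ∘ₗ of I U = U.subtype :=
  LinearMap.ext fun u => by simp [adicCompletionLift, map_of, ofLinearEquiv_symm_of]

theorem range_adicCompletionLift_eq_smul_sup (hI : I.FG) :
    LinearMap.range (adicCompletionLift I U) =
      I • LinearMap.range (adicCompletionLift I U) ⊔ U := by
  conv_lhs =>
    rw [LinearMap.range_eq_map, ← smul_top_sup_range_of hI, Submodule.map_sup, map_smul'',
      ← LinearMap.range_comp, adicCompletionLift_comp_of, range_subtype]
  rw [LinearMap.range_eq_map]

variable {I U}

theorem isAdicComplete_of_range_adicCompletionLift_le (hI : I.FG)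
    (hU : LinearMap.range (adicCompletionLift I U) ≤ U) : IsAdicComplete I U := by
  set φ := (adicCompletionLift I U).codRestrict U fun ξ => hU ⟨ξ, rfl⟩
  have hφof : φ ∘ₗ of I U = LinearMap.id :=
    LinearMap.ext fun u => Subtype.ext (LinearMap.congr_fun (adicCompletionLift_comp_of I U) u)
  set ψ := LinearMap.id - of I U ∘ₗ φ
  have hψ : ψ ∘ₗ of I U = 0 := by
    simp only [ψ, LinearMap.sub_comp, LinearMap.comp_assoc, hφof]
    simp
  have hker : LinearMap.ker φ ≤ LinearMap.range ψ := fun ξ hξ =>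
    ⟨ξ, by simp [ψ, LinearMap.mem_ker.mp hξ]⟩
  have hψ_div : LinearMap.range ψ ≤ I • LinearMap.range ψ := le_of_eq <| by
    conv_lhs => rw [LinearMap.range_eq_map, ← smul_top_sup_range_of hI, Submodule.map_sup,
      map_smul'', ← LinearMap.range_comp, hψ, LinearMap.range_zero, sup_bot_eq]
    rw [LinearMap.range_eq_map]
  have hφ_inj : Function.Injective φ := by
    rw [← LinearMap.ker_eq_bot, eq_bot_iff]
    exact hker.trans (IsHausdorff.eq_bot_of_le_smul hψ_div).le
  rw [← of_bijective_iff]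
  exact ⟨Function.LeftInverse.injective (g := φ) (LinearMap.congr_fun hφof),
    fun ξ => ⟨φ ξ, hφ_inj (LinearMap.congr_fun hφof (φ ξ))⟩⟩

theorem isAdicComplete_iff_forall_le_smul_sup_imp_le (hI : I.FG) :
    IsAdicComplete I U ↔ ∀ V : Submodule R M, V ≤ I • V ⊔ U → V ≤ U := by
  refine ⟨fun _ V hV => le_sup_left.trans (le_of_le_smul_sup (I := I) U le_sup_right ?_), fun h => ?_⟩
  · exact sup_le (hV.trans (sup_le_sup_right (smul_mono le_rfl le_sup_left) U)) le_sup_right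
  · exact isAdicComplete_of_range_adicCompletionLift_le hI
      (h _ (range_adicCompletionLift_eq_smul_sup I U hI).le)

end Submodule

theorem submodule_complete_iff_quotient_reduced
    (R : Type u) [CommRing R] [IsNoetherianRing R] [IsLocalRing R]
    (M : Type v) [AddCommGroup M] [Module R M]
    [IsAdicComplete (maximalIdeal R) M] (U : Submodule R M) :
    IsAdicComplete (maximalIdeal R) U ↔
      ∀ W : Submodule R (M ⧸ U), maximalIdeal R • W = W → W = ⊥ :=
  (isAdicComplete_iff_forall_le_smul_sup_imp_le (IsNoetherian.noetherian _)).trans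
    (forall_quotient_smul_eq_imp_eq_bot_iff U).symm
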